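/- arXiv:math/0703891 — 2 statements merged into one kernel-verified Lean document; each statement's English description precedes it below -/
import Mathlib

section
/- Let F and X be locally finite simple graphs, let φ be an Aut(F)-voltage assignment on X, and let p : Y → X be a graph covering. Define ψ on the directed edges of Y by ψ(xy) = φ(p(x)p(y)); then ψ is an Aut(F)-voltage assignment on Y, and the map p̃ : Y ×^ψ F → X ×^φ F given by p̃(x, i) = (p(x), i) is a graph covering (it preserves adjacency and restricts to a bijection from the neighborhood of each vertex (x,i) onto the neighborhood of (p(x), i)). -/
/-- `p : V → V'` is a graph covering from `G` to `H`: it preserves adjacency and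
restricts to a bijection from the neighborhood of each vertex `x` onto the
neighborhood of `p x`. -/
def IsGraphCovering {V V' : Type*} (G : SimpleGraph V) (H : SimpleGraph V')
    (p : V → V') : Prop :=
  (∀ ⦃x y⦄, G.Adj x y → H.Adj (p x) (p y)) ∧
    ∀ x, Set.BijOn p (G.neighborSet x) (H.neighborSet (p x))

/-- The graph bundle `G ×^φ F` determined by a voltage assignment
`φ : V → V → Equiv.Perm W` satisfying `φ v u = (φ u v)⁻¹` on adjacent pairs:
`(u, i)` is adjacent to `(v, j)` iff either `u ~ v` and `j = φ u v i`, or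
`u = v` and `i ~ j`. -/
def GraphBundle {V W : Type*} (G : SimpleGraph V) (F : SimpleGraph W)
    (φ : V → V → Equiv.Perm W)
    (hφ : ∀ ⦃u v⦄, G.Adj u v → φ v u = (φ u v)⁻¹) : SimpleGraph (V × W) where
  Adj p q := (G.Adj p.1 q.1 ∧ q.2 = φ p.1 q.1 p.2) ∨ (p.1 = q.1 ∧ F.Adj p.2 q.2)
  symm := by
    constructor
    rintro ⟨u, i⟩ ⟨v, j⟩ (⟨h, hj⟩ | ⟨h, hF⟩)
    · exact Or.inl ⟨h.symm, by simp only at hj ⊢; simp [hj, hφ h]⟩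
    · exact Or.inr ⟨h.symm, hF.symm⟩
  loopless := by
    constructor
    rintro ⟨u, i⟩ (⟨h, _⟩ | ⟨_, h⟩)
    · exact G.loopless.irrefl u h
    · exact F.loopless.irrefl i h

/-!
Adjacency in a bundle is either a lift of an edge of the base, carrying the fibre coordinate
along by the voltage, or an edge of a single fibre. Since the voltage on `Y` is pulled back
along `p`, the map `(x, i) ↦ (p x, i)` sends edges of the first kind to edges of the first kind
with the same fibre coordinates, and fibre edges to fibre edges; the bijection of neighbourhoods
in the base then lifts to the bundles fibrewise.
-/

section GraphBundle

variable {V V' W : Type*} {G : SimpleGraph V} {H : SimpleGraph V'} {F : SimpleGraph W}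
  {φ : V' → V' → Equiv.Perm W} (hφ : ∀ ⦃u v⦄, H.Adj u v → φ v u = (φ u v)⁻¹) {p : V → V'}
  (hψ : ∀ ⦃x y⦄, G.Adj x y → φ (p y) (p x) = (φ (p x) (p y))⁻¹)

include hφ hψ in
theorem GraphBundle.adj_map_of_adj (hpG : ∀ ⦃x y⦄, G.Adj x y → H.Adj (p x) (p y))
    {q r : V × W} (hqr : (GraphBundle G F (fun x y => φ (p x) (p y)) hψ).Adj q r) :
    (GraphBundle H F φ hφ).Adj (p q.1, q.2) (p r.1, r.2) := by
  rcases hqr with ⟨hG, hr⟩ | ⟨hq, hF⟩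
  · exact Or.inl ⟨hpG hG, hr⟩
  · exact Or.inr ⟨congrArg p hq, hF⟩

include hψ in
theorem GraphBundle.injOn_neighborSet_map (hpG : ∀ ⦃x y⦄, G.Adj x y → H.Adj (p x) (p y))
    {x : V} (hinj : Set.InjOn p (G.neighborSet x)) (i : W) :
    Set.InjOn (fun q : V × W => (p q.1, q.2))
      ((GraphBundle G F (fun x y => φ (p x) (p y)) hψ).neighborSet (x, i)) := by
  rintro ⟨y₁, j₁⟩ hy₁ ⟨y₂, j₂⟩ hy₂ heq
  simp only [Prod.mk.injEq] at heq
  obtain ⟨hpy, rfl⟩ := heq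
  rcases hy₁ with ⟨h₁, -⟩ | ⟨rfl, -⟩ <;> rcases hy₂ with ⟨h₂, -⟩ | ⟨rfl, -⟩
  · exact Prod.ext (hinj h₁ h₂ hpy) rfl
  · exact absurd hpy (hpG h₁).ne'
  · exact absurd hpy (hpG h₂).ne
  · rfl

include hφ hψ in
theorem GraphBundle.surjOn_neighborSet_map {x : V}
    (hsurj : Set.SurjOn p (G.neighborSet x) (H.neighborSet (p x))) (i : W) :
    Set.SurjOn (fun q : V × W => (p q.1, q.2))
      ((GraphBundle G F (fun x y => φ (p x) (p y)) hψ).neighborSet (x, i))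
      ((GraphBundle H F φ hφ).neighborSet (p x, i)) := by
  rintro ⟨v, j⟩ (⟨hH, hj⟩ | ⟨rfl, hF⟩)
  · obtain ⟨y, hy, rfl⟩ := hsurj hH
    exact ⟨(y, j), Or.inl ⟨hy, hj⟩, rfl⟩
  · exact ⟨(x, j), Or.inr ⟨rfl, hF⟩, rfl⟩

include hφ in
theorem IsGraphCovering.graphBundle (hp : IsGraphCovering G H p) :
    IsGraphCovering (GraphBundle G F (fun x y => φ (p x) (p y)) hψ) (GraphBundle H F φ hφ)
      (fun q => (p q.1, q.2)) :=
  ⟨fun _ _ => GraphBundle.adj_map_of_adj hφ hψ hp.1, fun ⟨x, i⟩ =>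
    ⟨fun _ => GraphBundle.adj_map_of_adj hφ hψ hp.1,
      GraphBundle.injOn_neighborSet_map hψ hp.1 (hp.2 x).injOn i,
      GraphBundle.surjOn_neighborSet_map hφ hψ (hp.2 x).surjOn i⟩⟩

end GraphBundle

theorem bundle_covering_of_covering_general {VX VY W : Type*}
    (X : SimpleGraph VX) (Y : SimpleGraph VY) (F : SimpleGraph W)
    (φ : VX → VX → Equiv.Perm W)
    (hφaut : ∀ ⦃u v⦄, X.Adj u v → ∀ i j, F.Adj i j ↔ F.Adj (φ u v i) (φ u v j))
    (hφ : ∀ ⦃u v⦄, X.Adj u v → φ v u = (φ u v)⁻¹)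
    (p : VY → VX) (hp : IsGraphCovering Y X p) :
    (∀ ⦃x y⦄, Y.Adj x y →
        (fun x y : VY => φ (p x) (p y)) y x = ((fun x y : VY => φ (p x) (p y)) x y)⁻¹) ∧
      (∀ ⦃x y⦄, Y.Adj x y → ∀ i j, F.Adj i j ↔
        F.Adj ((fun x y : VY => φ (p x) (p y)) x y i) ((fun x y : VY => φ (p x) (p y)) x y j)) ∧
      IsGraphCovering
        (GraphBundle Y F (fun x y => φ (p x) (p y)) (fun _ _ hxy => hφ (hp.1 hxy)))
        (GraphBundle X F φ hφ)
        (fun q => (p q.1, q.2)) :=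
  ⟨fun _ _ hxy => hφ (hp.1 hxy), fun _ _ hxy => hφaut (hp.1 hxy),
    hp.graphBundle hφ fun _ _ hxy => hφ (hp.1 hxy)⟩

/-- if `φ` is an `Aut(F)`-voltage assignment on `X` and `p : Y → X`
is a graph covering, then `ψ (x, y) = φ (p x, p y)` is an `Aut(F)`-voltage
assignment on `Y`, and `p̃ (x, i) = (p x, i)` is a graph covering
`Y ×^ψ F → X ×^φ F`. -/
theorem bundle_covering_of_covering {VX VY W : Type*}
    (X : SimpleGraph VX) (Y : SimpleGraph VY) (F : SimpleGraph W)
    (hXlf : X.LocallyFinite) (hYlf : Y.LocallyFinite) (hFlf : F.LocallyFinite)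
    (φ : VX → VX → Equiv.Perm W)
    (hφaut : ∀ ⦃u v⦄, X.Adj u v → ∀ i j, F.Adj i j ↔ F.Adj (φ u v i) (φ u v j))
    (hφ : ∀ ⦃u v⦄, X.Adj u v → φ v u = (φ u v)⁻¹)
    (p : VY → VX) (hp : IsGraphCovering Y X p) :
    (∀ ⦃x y⦄, Y.Adj x y →
        (fun x y : VY => φ (p x) (p y)) y x = ((fun x y : VY => φ (p x) (p y)) x y)⁻¹) ∧
      (∀ ⦃x y⦄, Y.Adj x y → ∀ i j, F.Adj i j ↔
        F.Adj ((fun x y : VY => φ (p x) (p y)) x y i) ((fun x y : VY => φ (p x) (p y)) x y j)) ∧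
      IsGraphCovering
        (GraphBundle Y F (fun x y => φ (p x) (p y)) (fun _ _ hxy => hφ (hp.1 hxy)))
        (GraphBundle X F φ hφ)
        (fun q => (p q.1, q.2)) :=
  bundle_covering_of_covering_general X Y F φ hφaut hφ p hp
end

section
/- Let G be a locally finite simple graph, F a finite simple graph, and φ an Aut(F)-voltage assignment on G. Then for all vertices u, v of G and i, j of F, the (0,1)-valued adjacency entry of the bundle satisfies A_{G ×^φ F}((u,i),(v,j)) = Σ_{γ ∈ Aut(F)} A_{G⃗_{(φ,γ)}}(u,v) · P_γ(i,j) + δ_{u,v} · A_F(i,j), where δ_{u,v} = 1 iff u = v. (In operator form: the adjacency operator of the bundle decomposes as ⊕_{γ ∈ Aut(F)} A_{G⃗_{(φ,γ)}} ⊗ P_γ + I_G ⊗ A_F.) -/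
instance {V W : Type*} [DecidableEq V] [DecidableEq W]
    (G : SimpleGraph V) (F : SimpleGraph W) [DecidableRel G.Adj] [DecidableRel F.Adj]
    (φ : V → V → Equiv.Perm W)
    (hφ : ∀ ⦃u v⦄, G.Adj u v → φ v u = (φ u v)⁻¹) :
    DecidableRel (GraphBundle G F φ hφ).Adj := fun p q =>
  decidable_of_iff ((G.Adj p.1 q.1 ∧ q.2 = φ p.1 q.1 p.2) ∨ (p.1 = q.1 ∧ F.Adj p.2 q.2)) Iff.rfl

/-! The two kinds of edges of `G ×^φ F` (lifts of edges of `G`, and edges of a fibre) never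
coincide because `G` is loopless, so the indicator of their union splits as a sum. In the sum
over `Aut(F)` only `γ = φ(uv)` contributes, and it does lie in `Aut(F)`. -/

theorem Finset.sum_ite_and_eq_mul_ite {α R : Type*} [Semiring R] [DecidableEq α]
    {s : Finset α} {P : Prop} [Decidable P] {Q : α → Prop} [DecidablePred Q] {a : α}
    (ha : P → a ∈ s) :
    ∑ x ∈ s, (if P ∧ a = x then (1 : R) else 0) * (if Q x then 1 else 0) =
      if P ∧ Q a then 1 else 0 := by
  by_cases hP : P
  · simp only [hP, true_and, ite_mul, one_mul, zero_mul]
    rw [Finset.sum_ite_eq, if_pos (ha hP)]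
  · simp only [hP, false_and, if_false, zero_mul, Finset.sum_const_zero]

theorem ite_or_eq_add_ite {R : Type*} [AddMonoidWithOne R] {p q : Prop} [Decidable p]
    [Decidable q] (h : ¬(p ∧ q)) :
    (if p ∨ q then (1 : R) else 0) = (if p then 1 else 0) + if q then 1 else 0 := by
  by_cases hp : p <;> by_cases hq : q <;> simp_all

theorem graphBundle_adjacency_entry_general {V W : Type*} [Fintype W] [DecidableEq W]
    (G : SimpleGraph V) (F : SimpleGraph W)
    [DecidableRel G.Adj] [DecidableRel F.Adj] [DecidableEq V]
    (φ : V → V → Equiv.Perm W)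
    (hφaut : ∀ ⦃u v⦄, G.Adj u v → ∀ i j, F.Adj i j ↔ F.Adj (φ u v i) (φ u v j))
    (hφ : ∀ ⦃u v⦄, G.Adj u v → φ v u = (φ u v)⁻¹)
    (u v : V) (i j : W) :
    (if (GraphBundle G F φ hφ).Adj (u, i) (v, j) then (1 : ℤ) else 0) =
      (∑ γ ∈ Finset.univ.filter
          (fun γ : Equiv.Perm W => ∀ i' j', F.Adj i' j' ↔ F.Adj (γ i') (γ j')),
        (if G.Adj u v ∧ φ u v = γ then (1 : ℤ) else 0) *
          (if j = γ i then (1 : ℤ) else 0)) +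
        (if u = v then (1 : ℤ) else 0) * (if F.Adj i j then (1 : ℤ) else 0) := by
  have hdisj : ¬((G.Adj u v ∧ j = φ u v i) ∧ u = v ∧ F.Adj i j) :=
    fun ⟨⟨huv, _⟩, rfl, _⟩ => G.loopless.irrefl u huv
  have hφ_mem : G.Adj u v → φ u v ∈ Finset.univ.filter
      (fun γ : Equiv.Perm W => ∀ i' j', F.Adj i' j' ↔ F.Adj (γ i') (γ j')) :=
    fun h => Finset.mem_filter.mpr ⟨Finset.mem_univ _, hφaut h⟩
  rw [Finset.sum_ite_and_eq_mul_ite hφ_mem, ite_zero_mul_ite_zero, mul_one,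
    ← ite_or_eq_add_ite hdisj]
  -- the bundle's adjacency is this disjunction by definition; only the `Decidable` instances differ
  exact if_congr Iff.rfl rfl rfl

/-- the `(0,1)`-adjacency entry of the bundle `G ×^φ F` decomposes as
`A_{G ×^φ F}((u,i),(v,j)) = Σ_{γ ∈ Aut(F)} A_{G⃗_{(φ,γ)}}(u,v) ⬝ P_γ(i,j) + δ_{u,v} ⬝ A_F(i,j)`,
where `A_{G⃗_{(φ,γ)}}(u,v) = 1` iff `u ~ v` and `φ u v = γ`, and `P_γ(i,j) = 1`
iff `j = γ i`. -/
theorem graphBundle_adjacency_entry {V W : Type*} [Fintype W] [DecidableEq W]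
    (G : SimpleGraph V) (F : SimpleGraph W)
    [DecidableRel G.Adj] [DecidableRel F.Adj] [DecidableEq V]
    (hGlf : G.LocallyFinite)
    (φ : V → V → Equiv.Perm W)
    (hφaut : ∀ ⦃u v⦄, G.Adj u v → ∀ i j, F.Adj i j ↔ F.Adj (φ u v i) (φ u v j))
    (hφ : ∀ ⦃u v⦄, G.Adj u v → φ v u = (φ u v)⁻¹)
    (u v : V) (i j : W) :
    (if (GraphBundle G F φ hφ).Adj (u, i) (v, j) then (1 : ℤ) else 0) =
      (∑ γ ∈ Finset.univ.filter
          (fun γ : Equiv.Perm W => ∀ i' j', F.Adj i' j' ↔ F.Adj (γ i') (γ j')),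
        (if G.Adj u v ∧ φ u v = γ then (1 : ℤ) else 0) *
          (if j = γ i then (1 : ℤ) else 0)) +
        (if u = v then (1 : ℤ) else 0) * (if F.Adj i j then (1 : ℤ) else 0) :=
  graphBundle_adjacency_entry_general G F φ hφaut hφ u v i j
end
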